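/- In a synchronous execution, if a requester p_i becomes fully-granted (it received a GRANT from every agent in D ∩ M within 2T_D of sending its request, with no DENY), then at the moment p_i transitions to EXECUTE, every requestee p_j ∈ D ∩ M that sent a GRANT is in status GRANT or GRANTGET with grantID = i, provided no RELEASE or EXIT from p_i has been delivered to p_j in the meantime. -/
import Mathlib


inductive RStatus | NORMAL | GET | TRYGET | GRANT | GRANTGET | EXECUTE
deriving DecidableEq

/-- Events observable by a requestee. -/
inductive REvent (ι : Type*)
  | recvGET (i : ι) | recvRELEASE (i : ι) | recvEXIT (i : ι)
  | tGrantExpire | tryManeuver | loop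

/-- Requestee state: status plus current grantID. -/
structure RState (ι : Type*) where
  status : RStatus
  grantID : Option ι

open RStatus REvent in
/-- Transitions of a requestee in the negotiation protocol. -/
inductive RStep {ι : Type*} : RState ι → REvent ι → RState ι → Prop
  | grantNormal (j : ι) : RStep ⟨NORMAL, none⟩ (recvGET j) ⟨GRANT, some j⟩
  | grantGet (j : ι) (g : Option ι) : RStep ⟨GET, g⟩ (recvGET j) ⟨GRANTGET, some j⟩
  | grantTryget (j : ι) (g : Option ι) : RStep ⟨TRYGET, g⟩ (recvGET j) ⟨GRANTGET, some j⟩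
  | regrant (j : ι) (s : RStatus) (hs : s = GRANT ∨ s = GRANTGET) :
      RStep ⟨s, some j⟩ (recvGET j) ⟨s, some j⟩
  | releaseGrant (j : ι) : RStep ⟨GRANT, some j⟩ (recvRELEASE j) ⟨NORMAL, none⟩
  | releaseGrantget (j : ι) : RStep ⟨GRANTGET, some j⟩ (recvRELEASE j) ⟨TRYGET, none⟩
  | exitGrant (j : ι) : RStep ⟨GRANT, some j⟩ (recvEXIT j) ⟨NORMAL, none⟩
  | exitGrantget (j : ι) : RStep ⟨GRANTGET, some j⟩ (recvEXIT j) ⟨TRYGET, none⟩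
  | expireGrant (j : ι) : RStep ⟨GRANT, some j⟩ tGrantExpire ⟨NORMAL, none⟩
  | expireGrantget (j : ι) : RStep ⟨GRANTGET, some j⟩ tGrantExpire ⟨GET, none⟩
  | tryManGrant (j : ι) : RStep ⟨GRANT, some j⟩ tryManeuver ⟨GRANTGET, some j⟩
  | tryManNormal : RStep ⟨NORMAL, none⟩ tryManeuver ⟨GET, none⟩
  | loopStep (s : RState ι) : RStep s loop s

open RStatus REvent in
/-- A requestee that granted `i` remains in status GRANT or GRANTGET with
`grantID = i` as long as no RELEASE or EXIT from `i` and no tGRANT expiry occurs,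
i.e., until the fully-granted requester `p_i` transitions to EXECUTE. -/
theorem requestee_keeps_grant {ι : Type*} (i : ι)
    (n : ℕ) (s : ℕ → RState ι) (e : ℕ → REvent ι)
    (hstep : ∀ k < n, RStep (s k) (e k) (s (k + 1)))
    (hinit : (s 0).status = GRANT ∨ (s 0).status = GRANTGET)
    (hinitg : (s 0).grantID = some i)
    (hnoev : ∀ k < n, e k ≠ recvRELEASE i ∧ e k ≠ recvEXIT i ∧ e k ≠ tGrantExpire) :
    ((s n).status = GRANT ∨ (s n).status = GRANTGET) ∧ (s n).grantID = some i := by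
  induction n with
  | zero => exact ⟨hinit, hinitg⟩
  | succ n ih =>
    obtain ⟨hs, hg⟩ := ih (fun k hk => hstep k (Nat.lt_succ_of_lt hk))
      (fun k hk => hnoev k (Nat.lt_succ_of_lt hk))
    have hst := hstep n (Nat.lt_succ_self n)
    obtain ⟨h1, h2, h3⟩ := hnoev n (Nat.lt_succ_self n)
    have hsn : s n = ⟨GRANT, some i⟩ ∨ s n = ⟨GRANTGET, some i⟩ := by
      rcases hh : s n with ⟨st, g⟩
      rcases hs with h | h
      · left; simp_all
      · right; simp_all
    generalize he : e n = ev at hst h1 h2 h3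
    generalize hs1 : s (n + 1) = t at hst ⊢
    rcases hsn with h | h <;> rw [h] at hst <;> cases hst <;> simp_all
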